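/- arXiv:2509.12010 — 3 statements merged into one kernel-verified Lean document; each statement's English description precedes it below -/
import Mathlib

section
/- There exist a finite discounted MDP without reward M = (S, A, s0, p, γ) and two deterministic policies π1, π2 on M such that the Lebesgue measure in ℝ^{S×A} of [−1,+1]^{S×A} ∩ R^{OPT,S}_{M,π1} is different from the Lebesgue measure of [−1,+1]^{S×A} ∩ R^{OPT,S}_{M,π2}. -/
/-!
Take two states and two actions with discount `1/2`: every transition leads to state `0`, except
action `1` in state `1`, which stays there. Write `(u, x, y, z)` for the rewards of
`(0,0), (0,1), (1,0), (1,1)`. A function `V` solving the Bellman optimality equation dominates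
every `V^π` (minimum principle for `V - V^π`) and is attained by a greedy deterministic policy, so
`V* = V`; solving the equation explicitly, the policy that always plays `0` is optimal iff
`x ≤ u ∧ 2z ≤ y + u`, and the identity policy iff `x ≤ u ∧ y + u ≤ 2z`. The volume-preserving
reflection `(u, x, y, z) ↦ (-x, -u, -y, -z)` of the cube maps the second region into the first
(as `x ≤ u`), missing a small ball around `(3/4, -3/4, 0, 0)`; hence the volumes differ.
-/

open scoped ENNReal

open scoped BigOperators
open MeasureTheory

/-- A finite discounted MDP without reward. -/
structure MDP (S A : Type) [Fintype S] [Fintype A] where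
  s0 : S
  p : S → A → S → ℝ
  p_nonneg : ∀ s a s', 0 ≤ p s a s'
  p_sum_one : ∀ s a, ∑ s', p s a s' = 1
  disc : ℝ
  disc_nonneg : 0 ≤ disc
  disc_lt_one : disc < 1

section Defs

variable {S A : Type} [Fintype S] [Fintype A] [DecidableEq S] [DecidableEq A]

/-- `π` is a (stochastic) policy: each `π s` is a probability distribution on actions. -/
def IsPolicy (π : S → A → ℝ) : Prop :=
  (∀ s a, 0 ≤ π s a) ∧ ∀ s, ∑ a, π s a = 1

open Classical in
/-- The stochastic policy induced by a deterministic policy `d`. -/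
noncomputable def detPolicy (d : S → A) : S → A → ℝ :=
  fun s a => if a = d s then 1 else 0

/-- The state-transition matrix of a policy. -/
noncomputable def Pmat (M : MDP S A) (π : S → A → ℝ) : Matrix S S ℝ :=
  Matrix.of fun s s' => ∑ a, π s a * M.p s a s'

/-- The value function `V^π(s; p, r)`. -/
noncomputable def Vpi (M : MDP S A) (π : S → A → ℝ) (r : S × A → ℝ) (s : S) : ℝ :=
  ∑' t : ℕ, M.disc ^ t * ((Pmat M π ^ t).mulVec (fun s' => ∑ a, π s' a * r (s', a))) s

/-- The optimal value function `V*(s; p, r)`. -/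
noncomputable def Vstar (M : MDP S A) (r : S × A → ℝ) (s : S) : ℝ :=
  ⨆ π : {π : S → A → ℝ // IsPolicy π}, Vpi M π.1 r s

noncomputable def Qpi (M : MDP S A) (π : S → A → ℝ) (r : S × A → ℝ) (s : S) (a : A) : ℝ :=
  r (s, a) + M.disc * ∑ s', M.p s a s' * Vpi M π r s'

noncomputable def Api (M : MDP S A) (π : S → A → ℝ) (r : S × A → ℝ) (s : S) (a : A) : ℝ :=
  Qpi M π r s a - Vpi M π r s

noncomputable def Qstar (M : MDP S A) (r : S × A → ℝ) (s : S) (a : A) : ℝ :=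
  r (s, a) + M.disc * ∑ s', M.p s a s' * Vstar M r s'

noncomputable def Astar (M : MDP S A) (r : S × A → ℝ) (s : S) (a : A) : ℝ :=
  Qstar M r s a - Vstar M r s

/-- The soft (entropy-regularized) value function `V^π_λ(s; p, r)`. -/
noncomputable def VpiSoft (M : MDP S A) (lam : ℝ) (π : S → A → ℝ) (r : S × A → ℝ) (s : S) : ℝ :=
  ∑' t : ℕ, M.disc ^ t *
    ((Pmat M π ^ t).mulVec
      (fun s' => ∑ a, π s' a * (r (s', a) - lam * Real.log (π s' a)))) s

noncomputable def VstarSoft (M : MDP S A) (lam : ℝ) (r : S × A → ℝ) (s : S) : ℝ :=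
  ⨆ π : {π : S → A → ℝ // IsPolicy π}, VpiSoft M lam π.1 r s

noncomputable def QstarSoft (M : MDP S A) (lam : ℝ) (r : S × A → ℝ) (s : S) (a : A) : ℝ :=
  r (s, a) + M.disc * ∑ s', M.p s a s' * VstarSoft M lam r s'

noncomputable def AstarSoft (M : MDP S A) (lam : ℝ) (r : S × A → ℝ) (s : S) (a : A) : ℝ :=
  QstarSoft M lam r s a - VstarSoft M lam r s

/-- The OPT feasible set `R^{OPT,S̄}_{M,d}` of a deterministic policy `d`. -/
def ROPT (M : MDP S A) (Sbar : Set S) (d : S → A) : Set (S × A → ℝ) :=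
  {r | ∀ s ∈ Sbar, ∀ a, Qstar M r s a ≤ Qstar M r s (d s)}

/-- The MCE feasible set `R^{MCE,S}_{M,π}` (with `S̄ = S`). -/
def RMCE (M : MDP S A) (lam : ℝ) (π : S → A → ℝ) : Set (S × A → ℝ) :=
  {r | ∀ s a, π s a =
      Real.exp (QstarSoft M lam r s a / lam) / ∑ a', Real.exp (QstarSoft M lam r s a' / lam)}

/-- The BIRL feasible set `R^{BIRL,S}_{M,π}` (with `S̄ = S`). -/
def RBIRL (M : MDP S A) (bet : ℝ) (π : S → A → ℝ) : Set (S × A → ℝ) :=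
  {r | ∀ s a, π s a =
      Real.exp (Qstar M r s a / bet) / ∑ a', Real.exp (Qstar M r s a' / bet)}

open Classical in
/-- The matrix `W_{p,π}`. -/
noncomputable def Wmat (M : MDP S A) (π : S → A → ℝ) : Matrix S S ℝ :=
  Matrix.of fun s s' => (if s' = s then (1 : ℝ) else 0) - M.disc * ∑ a, π s a * M.p s a s'

/-- `k_π := |det W_{p,π}|^{-1/|S|}`. -/
noncomputable def kpi (M : MDP S A) (π : S → A → ℝ) : ℝ :=
  |(Wmat M π).det| ^ (-(1 : ℝ) / (Fintype.card S : ℝ))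

/-- `𝒮R^{OPT}_M`. -/
def SROPT (M : MDP S A) (C1 C2 : ℝ) : Set (S × A → ℝ) :=
  {r | ∀ π : S → A → ℝ, IsPolicy π → (∀ s, Vpi M π r s = Vstar M r s) →
      ∀ s a, |Vpi M π r s| ≤ C1 * kpi M π ∧ |Api M π r s a| ≤ C2}

/-- `𝒮R^{MCE}_M`. -/
def SRMCE (M : MDP S A) (lam C1 C2 : ℝ) : Set (S × A → ℝ) :=
  {r | ∀ s a, |VstarSoft M lam r s| ≤ C1 ∧ |AstarSoft M lam r s a| ≤ C2}

/-- `𝒮R^{BIRL}_M`. -/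
def SRBIRL (M : MDP S A) (C1 C2 : ℝ) : Set (S × A → ℝ) :=
  {r | ∀ s a, |Vstar M r s| ≤ C1 ∧ |Astar M r s a| ≤ C2}

/-- Discounted state occupancy `∑_{t≥0} γ^t P_{M,π}(s_t = s)`. -/
noncomputable def occ (M : MDP S A) (π : S → A → ℝ) (s : S) : ℝ :=
  ∑' t : ℕ, M.disc ^ t * (Pmat M π ^ t) M.s0 s

/-- The support `S_{M,π}` of a policy: states reachable with positive probability. -/
def supp (M : MDP S A) (π : S → A → ℝ) : Set S := {s | 0 < occ M π s}

end Defs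

/-- The unit hypercube `[-1,1]^{S×A}`. -/
def cube (S A : Type) [Fintype S] [Fintype A] : Set (S × A → ℝ) :=
  {r | ∀ sa, |r sa| ≤ 1}

open Finset Matrix

namespace Matrix

variable {R n : Type*} [CommRing R] [LinearOrder R] [IsStrictOrderedRing R] [Fintype n]
  [DecidableEq n] {P : Matrix n n R} {v : n → R}

theorem le_mulVec_of_mem_rowStochastic (hP : P ∈ rowStochastic R n) {c : R} (hv : ∀ j, c ≤ v j)
    (i : n) : c ≤ (P *ᵥ v) i :=
  calc c = ∑ j, P i j * c := by rw [← sum_mul, sum_row_of_mem_rowStochastic hP, one_mul]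
    _ ≤ (P *ᵥ v) i :=
      sum_le_sum fun j _ => mul_le_mul_of_nonneg_left (hv j) (nonneg_of_mem_rowStochastic hP)

theorem abs_mulVec_le_of_mem_rowStochastic (hP : P ∈ rowStochastic R n) {C : R}
    (hv : ∀ j, |v j| ≤ C) (i : n) : |(P *ᵥ v) i| ≤ C := by
  have lower := le_mulVec_of_mem_rowStochastic hP (fun j => neg_le_of_abs_le (hv j)) i
  have upper := le_mulVec_of_mem_rowStochastic hP (v := -v)
    (fun j => neg_le_neg (le_of_abs_le (hv j))) i
  rw [mulVec_neg, Pi.neg_apply, neg_le_neg_iff] at upper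
  exact abs_le.2 ⟨lower, upper⟩

-- Minimum principle: evaluate the inequality at a minimiser of `v`.
theorem nonneg_of_mul_mulVec_le (hP : P ∈ rowStochastic R n) {γ : R} (hγ₀ : 0 ≤ γ)
    (hγ₁ : γ < 1) (hv : ∀ j, γ * (P *ᵥ v) j ≤ v j) (i : n) : 0 ≤ v i := by
  have : Nonempty n := ⟨i⟩
  obtain ⟨i₀, hmin⟩ := Finite.exists_min v
  have hmean := mul_le_mul_of_nonneg_left (le_mulVec_of_mem_rowStochastic hP hmin i₀) hγ₀
  nlinarith [hv i₀, hmin i]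

end Matrix

section MDP

variable {S A : Type} [Fintype A]

def expectedReward (π : S → A → ℝ) (r : S × A → ℝ) (s : S) : ℝ :=
  ∑ a, π s a * r (s, a)

theorem sum_detPolicy_mul [DecidableEq A] (d : S → A) (f : A → ℝ) (s : S) :
    ∑ a, detPolicy d s a * f a = f (d s) := by
  simp [detPolicy]

theorem isPolicy_detPolicy [DecidableEq A] (d : S → A) : IsPolicy (detPolicy d) :=
  ⟨fun s a => by unfold detPolicy; split_ifs <;> norm_num,
    fun s => by simpa using sum_detPolicy_mul d (fun _ => 1) s⟩

variable [Fintype S] (M : MDP S A)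

def bellmanQ (r : S × A → ℝ) (V : S → ℝ) (s : S) (a : A) : ℝ :=
  r (s, a) + M.disc * ∑ s', M.p s a s' * V s'

theorem expectedReward_add_disc_mul_mulVec (π : S → A → ℝ) (r : S × A → ℝ) (V : S → ℝ) (s : S) :
    expectedReward π r s + M.disc * (Pmat M π *ᵥ V) s = ∑ a, π s a * bellmanQ M r V s a := by
  simp only [expectedReward, bellmanQ, Pmat, mulVec, dotProduct, of_apply, mul_add,
    sum_add_distrib, mul_sum, sum_mul]
  rw [sum_comm (γ := A)]
  congr 1
  exact sum_congr rfl fun a _ => sum_congr rfl fun s' _ => by ring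

variable [DecidableEq S]

theorem IsPolicy.pmat_mem_rowStochastic {π : S → A → ℝ} (hπ : IsPolicy π) :
    Pmat M π ∈ rowStochastic ℝ S := by
  refine mem_rowStochastic_iff_sum.2 ⟨fun s s' => ?_, fun s => ?_⟩
  · exact sum_nonneg fun a _ => mul_nonneg (hπ.1 s a) (M.p_nonneg s a s')
  · simp only [Pmat, of_apply]
    rw [sum_comm]
    simp_rw [← mul_sum, M.p_sum_one, mul_one]
    exact hπ.2 s

theorem summable_vpi {π : S → A → ℝ} (hπ : IsPolicy π) (r : S × A → ℝ) (s : S) :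
    Summable fun t : ℕ => M.disc ^ t * ((Pmat M π ^ t) *ᵥ expectedReward π r) s := by
  refine Summable.of_norm_bounded ((summable_geometric_of_lt_one M.disc_nonneg
    M.disc_lt_one).mul_left ‖expectedReward π r‖) fun t => ?_
  rw [Real.norm_eq_abs, abs_mul, abs_pow, abs_of_nonneg M.disc_nonneg, mul_comm]
  refine mul_le_mul_of_nonneg_right ?_ (pow_nonneg M.disc_nonneg t)
  exact abs_mulVec_le_of_mem_rowStochastic (pow_mem (hπ.pmat_mem_rowStochastic M) t)
    (fun s' => norm_le_pi_norm (expectedReward π r) s') s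

theorem vpi_eq_expectedReward_add {π : S → A → ℝ} (hπ : IsPolicy π) (r : S × A → ℝ) (s : S) :
    Vpi M π r s = expectedReward π r s + M.disc * (Pmat M π *ᵥ Vpi M π r) s := by
  have hsum := summable_vpi M hπ r
  change ∑' t : ℕ, M.disc ^ t * ((Pmat M π ^ t) *ᵥ expectedReward π r) s = _
  rw [(hsum s).tsum_eq_zero_add]
  congr 1
  · simp [expectedReward]
  · calc ∑' t : ℕ, M.disc ^ (t + 1) * ((Pmat M π ^ (t + 1)) *ᵥ expectedReward π r) s
        = ∑' t : ℕ, M.disc * ∑ s', Pmat M π s s' *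
            (M.disc ^ t * ((Pmat M π ^ t) *ᵥ expectedReward π r) s') := by
          congr 1
          funext t
          rw [pow_succ', pow_succ', ← mulVec_mulVec, mul_sum]
          simp only [mulVec, dotProduct, mul_sum]
          ring_nf
      _ = M.disc * (Pmat M π *ᵥ Vpi M π r) s := by
          rw [tsum_mul_left, Summable.tsum_finsetSum fun s' _ => (hsum s').mul_left _]
          simp_rw [tsum_mul_left]
          rfl

variable {M}

theorem vpi_le_of_bellman {π : S → A → ℝ} (hπ : IsPolicy π) {r : S × A → ℝ} {V : S → ℝ}
    (hV : ∀ s, expectedReward π r s + M.disc * (Pmat M π *ᵥ V) s ≤ V s) (s : S) :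
    Vpi M π r s ≤ V s := by
  refine sub_nonneg.1 (nonneg_of_mul_mulVec_le (hπ.pmat_mem_rowStochastic M) M.disc_nonneg
    M.disc_lt_one (v := V - Vpi M π r) (fun s => ?_) s)
  rw [mulVec_sub, Pi.sub_apply, Pi.sub_apply, mul_sub]
  linarith [hV s, vpi_eq_expectedReward_add M hπ r s]

theorem le_vpi_of_bellman {π : S → A → ℝ} (hπ : IsPolicy π) {r : S × A → ℝ} {V : S → ℝ}
    (hV : ∀ s, V s ≤ expectedReward π r s + M.disc * (Pmat M π *ᵥ V) s) (s : S) :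
    V s ≤ Vpi M π r s := by
  refine sub_nonneg.1 (nonneg_of_mul_mulVec_le (hπ.pmat_mem_rowStochastic M) M.disc_nonneg
    M.disc_lt_one (v := Vpi M π r - V) (fun s => ?_) s)
  rw [mulVec_sub, Pi.sub_apply, Pi.sub_apply, mul_sub]
  linarith [hV s, vpi_eq_expectedReward_add M hπ r s]

theorem vstar_eq_of_isGreatest [DecidableEq A] {r : S × A → ℝ} {V : S → ℝ}
    (hV : ∀ s, IsGreatest (Set.range (bellmanQ M r V s)) (V s)) : Vstar M r = V := by
  choose d hd using fun s => (hV s).1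
  have upper (π : {π : S → A → ℝ // IsPolicy π}) (s : S) : Vpi M π.1 r s ≤ V s := by
    refine vpi_le_of_bellman π.2 (fun s => ?_) s
    rw [expectedReward_add_disc_mul_mulVec]
    calc ∑ a, π.1 s a * bellmanQ M r V s a ≤ ∑ a, π.1 s a * V s :=
          sum_le_sum fun a _ => mul_le_mul_of_nonneg_left ((hV s).2 ⟨a, rfl⟩) (π.2.1 s a)
      _ = V s := by rw [← sum_mul, π.2.2, one_mul]
  have lower (s : S) : V s ≤ Vpi M (detPolicy d) r s :=
    le_vpi_of_bellman (isPolicy_detPolicy d) (fun s => by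
      rw [expectedReward_add_disc_mul_mulVec, sum_detPolicy_mul, hd]) s
  let πd : {π : S → A → ℝ // IsPolicy π} := ⟨detPolicy d, isPolicy_detPolicy d⟩
  have : Nonempty {π : S → A → ℝ // IsPolicy π} := ⟨πd⟩
  funext s
  exact le_antisymm (ciSup_le fun π => upper π s)
    ((lower s).trans (le_ciSup ⟨V s, Set.forall_mem_range.2 fun π => upper π s⟩ πd))

end MDP

def nextState (s a : Fin 2) : Fin 2 := if s = 1 ∧ a = 1 then 1 else 0

noncomputable def exampleMDP : MDP (Fin 2) (Fin 2) where
  s0 := 0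
  p s a s' := if s' = nextState s a then 1 else 0
  p_nonneg s a s' := by split_ifs <;> norm_num
  p_sum_one s a := by simp
  disc := 1 / 2
  disc_nonneg := by norm_num
  disc_lt_one := by norm_num

theorem bellmanQ_exampleMDP (r : Fin 2 × Fin 2 → ℝ) (V : Fin 2 → ℝ) (s a : Fin 2) :
    bellmanQ exampleMDP r V s a = r (s, a) + V (nextState s a) / 2 := by
  simp only [bellmanQ, exampleMDP, ite_mul, one_mul, zero_mul, sum_ite_eq', mem_univ, if_true]
  ring

noncomputable def exampleVstar (r : Fin 2 × Fin 2 → ℝ) : Fin 2 → ℝ :=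
  ![2 * max (r (0, 0)) (r (0, 1)), max (r (1, 0) + max (r (0, 0)) (r (0, 1))) (2 * r (1, 1))]

theorem isGreatest_range_fin_two {α : Type*} [LinearOrder α] (f : Fin 2 → α) :
    IsGreatest (Set.range f) (max (f 0) (f 1)) :=
  ⟨(max_choice (f 0) (f 1)).elim (fun h => ⟨0, h.symm⟩) (fun h => ⟨1, h.symm⟩),
    Set.forall_mem_range.2 (Fin.forall_fin_two.2 ⟨le_max_left _ _, le_max_right _ _⟩)⟩

theorem vstar_exampleMDP (r : Fin 2 × Fin 2 → ℝ) : Vstar exampleMDP r = exampleVstar r := by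
  have bellman (s : Fin 2) : exampleVstar r s = max (bellmanQ exampleMDP r (exampleVstar r) s 0)
      (bellmanQ exampleMDP r (exampleVstar r) s 1) := by
    fin_cases s <;> simp only [bellmanQ_exampleMDP, nextState, exampleVstar] <;> norm_num
    · rw [max_add_add_right]
      ring
    · generalize r (1, 0) + max (r (0, 0)) (r (0, 1)) = x
      rcases le_total (2 * r (1, 1)) x with h | h
      · rw [max_eq_left h, max_eq_left (by linarith)]
      · rw [max_eq_right h, max_eq_right (by linarith)]
        ring
  exact vstar_eq_of_isGreatest fun s => bellman s ▸ isGreatest_range_fin_two _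

theorem qstar_exampleMDP (r : Fin 2 × Fin 2 → ℝ) (s a : Fin 2) :
    Qstar exampleMDP r s a = r (s, a) + exampleVstar r (nextState s a) / 2 := by
  rw [← bellmanQ_exampleMDP, ← vstar_exampleMDP]
  rfl

theorem ropt_exampleMDP_const_zero : ROPT exampleMDP Set.univ (fun _ => 0) =
    {r | r (0, 1) ≤ r (0, 0) ∧ 2 * r (1, 1) ≤ r (1, 0) + r (0, 0)} := by
  ext r
  simp only [ROPT, Set.mem_univ, forall_const, Fin.forall_fin_two, qstar_exampleMDP, nextState,
    exampleVstar, Set.mem_ofPred_eq]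
  norm_num
  intro h0
  rw [max_eq_left h0]
  rcases le_total (2 * r (1, 1)) (r (1, 0) + r (0, 0)) with h | h <;>
    simp only [max_eq_left h, max_eq_right h] <;> constructor <;> intro <;> linarith

theorem ropt_exampleMDP_id : ROPT exampleMDP Set.univ id =
    {r | r (0, 1) ≤ r (0, 0) ∧ r (1, 0) + r (0, 0) ≤ 2 * r (1, 1)} := by
  ext r
  simp only [ROPT, Set.mem_univ, forall_const, Fin.forall_fin_two, qstar_exampleMDP, nextState,
    exampleVstar, Set.mem_ofPred_eq]
  norm_num
  intro h0
  rw [max_eq_left h0]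
  rcases le_total (2 * r (1, 1)) (r (1, 0) + r (0, 0)) with h | h <;>
    simp only [max_eq_left h, max_eq_right h] <;> constructor <;> intro <;> linarith

theorem cube_eq_closedBall (S A : Type) [Fintype S] [Fintype A] :
    cube S A = Metric.closedBall 0 1 := by
  ext r
  simp [cube, pi_norm_le_iff_of_nonneg, Real.norm_eq_abs]

def reflect : (Fin 2 × Fin 2 → ℝ) ≃ᵐ (Fin 2 × Fin 2 → ℝ) :=
  (MeasurableEquiv.piCongrLeft (fun _ => ℝ) (Equiv.swap (0, 0) (0, 1))).trans
    (MeasurableEquiv.neg _)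

theorem reflect_apply (r : Fin 2 × Fin 2 → ℝ) (i : Fin 2 × Fin 2) :
    reflect r i = -r (Equiv.swap (0, 0) (0, 1) i) := by
  simp [reflect, MeasurableEquiv.coe_piCongrLeft, Equiv.piCongrLeft_apply_eq_cast]

theorem reflect_apply_zero_zero (r : Fin 2 × Fin 2 → ℝ) : reflect r (0, 0) = -r (0, 1) := by
  simp [reflect_apply]

theorem reflect_apply_zero_one (r : Fin 2 × Fin 2 → ℝ) : reflect r (0, 1) = -r (0, 0) := by
  simp [reflect_apply]

theorem reflect_apply_one (r : Fin 2 × Fin 2 → ℝ) (a : Fin 2) : reflect r (1, a) = -r (1, a) := by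
  rw [reflect_apply, Equiv.swap_apply_of_ne_of_ne] <;> simp

theorem measurePreserving_reflect : MeasurePreserving reflect volume volume :=
  (volume_measurePreserving_piCongrLeft _ _).trans (Measure.measurePreserving_neg _)

theorem reflect_mem_cube {r : Fin 2 × Fin 2 → ℝ} (hr : r ∈ cube (Fin 2) (Fin 2)) :
    reflect r ∈ cube (Fin 2) (Fin 2) := fun i => by
  rw [reflect_apply, abs_neg]
  exact hr _

theorem abs_coord_sub_lt_of_mem_ball {r : Fin 2 × Fin 2 → ℝ}
    (hr : r ∈ Metric.ball (Function.uncurry ![![3 / 4, -3 / 4], ![0, 0]]) (1 / 8)) :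
    |r (0, 0) - 3 / 4| < 1 / 8 ∧ |r (0, 1) + 3 / 4| < 1 / 8 ∧
      |r (1, 0)| < 1 / 8 ∧ |r (1, 1)| < 1 / 8 := by
  have h (i) := (dist_le_pi_dist r _ i).trans_lt hr
  have h00 := h (0, 0)
  have h01 := h (0, 1)
  have h10 := h (1, 0)
  have h11 := h (1, 1)
  norm_num [Real.dist_eq] at h00 h01 h10 h11
  exact ⟨h00, h01, h10, h11⟩

theorem volume_cube_inter_ropt_id_lt :
    volume (cube (Fin 2) (Fin 2) ∩ ROPT exampleMDP Set.univ id) <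
      volume (cube (Fin 2) (Fin 2) ∩ ROPT exampleMDP Set.univ fun _ => 0) := by
  rw [ropt_exampleMDP_id, ropt_exampleMDP_const_zero]
  set R₁ := cube (Fin 2) (Fin 2) ∩ {r | r (0, 1) ≤ r (0, 0) ∧ 2 * r (1, 1) ≤ r (1, 0) + r (0, 0)}
  set R₂ := cube (Fin 2) (Fin 2) ∩ {r | r (0, 1) ≤ r (0, 0) ∧ r (1, 0) + r (0, 0) ≤ 2 * r (1, 1)}
  set U : Set (Fin 2 × Fin 2 → ℝ) :=
    Metric.ball (Function.uncurry ![![3 / 4, -3 / 4], ![0, 0]]) (1 / 8)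
  have hR₂ : R₂ ⊆ reflect ⁻¹' R₁ := by
    rintro r ⟨hcube, h0, h1⟩
    refine ⟨reflect_mem_cube hcube, ?_, ?_⟩ <;>
      simp only [reflect_apply_zero_zero, reflect_apply_zero_one, reflect_apply_one] <;> linarith
  have hU : U ⊆ reflect ⁻¹' R₁ \ R₂ := by
    intro r hr
    obtain ⟨h00, h01, h10, h11⟩ := abs_coord_sub_lt_of_mem_ball hr
    rw [abs_lt] at h00 h01 h10 h11
    refine ⟨⟨reflect_mem_cube ?_, ?_, ?_⟩, fun ⟨_, _, h⟩ => by linarith⟩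
    · simp only [cube, Set.mem_ofPred_eq, Prod.forall, Fin.forall_fin_two, abs_le]
      refine ⟨⟨⟨?_, ?_⟩, ?_, ?_⟩, ⟨?_, ?_⟩, ?_, ?_⟩ <;> linarith
    all_goals
      simp only [reflect_apply_zero_zero, reflect_apply_zero_one, reflect_apply_one]
      linarith
  have hR₂_finite : volume R₂ ≠ ⊤ :=
    ((measure_mono Set.inter_subset_left).trans_lt
      (cube_eq_closedBall (Fin 2) (Fin 2) ▸ measure_closedBall_lt_top)).ne
  calc volume R₂ < volume R₂ + volume U :=
        ENNReal.lt_add_right hR₂_finite (Metric.measure_ball_pos _ _ (by norm_num)).ne'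
    _ = volume (R₂ ∪ U) :=
        (measure_union (Set.disjoint_sdiff_right.mono_right hU) measurableSet_ball).symm
    _ ≤ volume (reflect ⁻¹' R₁) :=
        measure_mono (Set.union_subset hR₂ (hU.trans Set.sdiff_subset))
    _ = volume R₁ := measurePreserving_reflect.measure_preimage_equiv R₁

/-- there is a finite MDP without reward and two deterministic policies whose
OPT feasible sets intersected with the unit hypercube have different Lebesgue measures. -/
theorem statement0 :
    ∃ (nS nA : ℕ) (M : MDP (Fin nS) (Fin nA)) (d1 d2 : Fin nS → Fin nA),
      MeasureTheory.volume (cube (Fin nS) (Fin nA) ∩ ROPT M Set.univ d1) ≠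
        MeasureTheory.volume (cube (Fin nS) (Fin nA) ∩ ROPT M Set.univ d2) :=
  ⟨2, 2, exampleMDP, fun _ => 0, id, volume_cube_inter_ropt_id_lt.ne'⟩
end

section
/- There exist a finite discounted MDP without reward M = (S, A, s0, p, γ), parameters λ > 0 and β > 0, and two stochastic policies π1, π2 with π_i(a|s) > 0 for all s, a, such that the |S|-dimensional Hausdorff measure in ℝ^{S×A} of [−1,+1]^{S×A} ∩ R^{MCE,S}_{M,π1} differs from that of [−1,+1]^{S×A} ∩ R^{MCE,S}_{M,π2}, and likewise the |S|-dimensional Hausdorff measure of [−1,+1]^{S×A} ∩ R^{BIRL,S}_{M,π1} differs from that of [−1,+1]^{S×A} ∩ R^{BIRL,S}_{M,π2}. -/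
open scoped ENNReal

open scoped BigOperators
open MeasureTheory

/-! With discount `0` both `Q*` and the soft `Q*_λ` coincide with the reward, so on a one-state
MDP both feasible sets are `{r | π = softmax (r / λ)}`. For the uniform policy this set contains
every constant reward, hence a segment of length `2` inside the cube, and has positive
`1`-dimensional measure. For `π₂ = softmax (1, 0)` and `λ = 3` it forces a reward gap of `3`
between the two actions, which the cube `[-1, 1]²` cannot accommodate, so it misses the cube. -/

noncomputable def softmax {A : Type} [Fintype A] (q : A → ℝ) (a : A) : ℝ :=
  Real.exp (q a) / ∑ a', Real.exp (q a')

section Softmax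

variable {A : Type} [Fintype A]

theorem sum_exp_pos [Nonempty A] (q : A → ℝ) : 0 < ∑ a, Real.exp (q a) :=
  Finset.sum_pos (fun a _ => Real.exp_pos (q a)) Finset.univ_nonempty

theorem softmax_pos [Nonempty A] (q : A → ℝ) (a : A) : 0 < softmax q a :=
  div_pos (Real.exp_pos _) (sum_exp_pos q)

theorem sum_softmax [Nonempty A] (q : A → ℝ) : ∑ a, softmax q a = 1 := by
  simp only [softmax, ← Finset.sum_div]
  exact div_self (sum_exp_pos q).ne'

theorem softmax_const [Nonempty A] (c : ℝ) (a : A) :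
    softmax (fun _ => c) a = (Fintype.card A : ℝ)⁻¹ := by
  simp only [softmax, Finset.sum_const, Finset.card_univ, nsmul_eq_mul]
  field_simp

theorem softmax_div_softmax [Nonempty A] (q : A → ℝ) (a a' : A) :
    softmax q a / softmax q a' = Real.exp (q a - q a') := by
  simp only [softmax, Real.exp_sub]
  field_simp [(sum_exp_pos q).ne']

theorem sub_eq_sub_of_softmax_eq [Nonempty A] {q q' : A → ℝ} (h : softmax q = softmax q')
    (a a' : A) : q a - q a' = q' a - q' a' := by
  apply Real.exp_injective
  rw [← softmax_div_softmax, ← softmax_div_softmax, h]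

end Softmax

section FeasibleSets

variable {S A : Type} [Fintype A]

theorem isPolicy_softmax [Nonempty A] (q : S → A → ℝ) : IsPolicy fun s => softmax (q s) :=
  ⟨fun s a => (softmax_pos (q s) a).le, fun s => sum_softmax (q s)⟩

def softmaxFeasible (lam : ℝ) (π : S → A → ℝ) : Set (S × A → ℝ) :=
  {r | ∀ s, π s = softmax fun a => r (s, a) / lam}

theorem RMCE_eq_softmaxFeasible [Fintype S] [DecidableEq S] [DecidableEq A] (M : MDP S A)
    (hM : M.disc = 0) (lam : ℝ) (π : S → A → ℝ) :
    RMCE M lam π = softmaxFeasible lam π := by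
  ext r
  simp only [RMCE, softmaxFeasible, QstarSoft, hM, zero_mul, add_zero, funext_iff]
  rfl

theorem RBIRL_eq_softmaxFeasible [Fintype S] [DecidableEq S] [DecidableEq A] (M : MDP S A)
    (hM : M.disc = 0) (bet : ℝ) (π : S → A → ℝ) :
    RBIRL M bet π = softmaxFeasible bet π := by
  ext r
  simp only [RBIRL, softmaxFeasible, Qstar, hM, zero_mul, add_zero, funext_iff]
  rfl

theorem const_mem_softmaxFeasible [Nonempty A] (lam t : ℝ) :
    (fun _ => t) ∈ softmaxFeasible lam fun (_ : S) => softmax (fun (_ : A) => 0) := by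
  intro s
  funext a
  simp only [softmax_const]

theorem cube_inter_softmaxFeasible_eq_empty [Fintype S] [Nonempty A] {lam : ℝ} (hlam : 0 < lam)
    (q : S → A → ℝ) {s : S} {a a' : A} (hgap : 2 < lam * (q s a - q s a')) :
    cube S A ∩ softmaxFeasible lam (fun s => softmax (q s)) = ∅ := by
  refine Set.eq_empty_of_forall_notMem fun r ⟨hcube, hr⟩ => ?_
  have hsub := sub_eq_sub_of_softmax_eq (hr s) a a'
  rw [← sub_div, eq_div_iff hlam.ne', mul_comm] at hsub
  have hra := abs_le.mp (hcube (s, a))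
  have hra' := abs_le.mp (hcube (s, a'))
  linarith

end FeasibleSets

theorem hausdorffMeasure_one_pos_of_Icc_subset_image {X : Type*} [EMetricSpace X]
    [MeasurableSpace X] [BorelSpace X] {f : X → ℝ} {K : NNReal} (hf : LipschitzWith K f)
    {s : Set X} {a b : ℝ} (hab : a < b) (hsub : Set.Icc a b ⊆ f '' s) : 0 < μH[1] s := by
  refine pos_iff_ne_zero.mpr fun hs => ?_
  have : μH[1] (Set.Icc a b) ≤ (K : ENNReal) ^ (1 : ℝ) * μH[1] s :=
    (measure_mono hsub).trans (hf.hausdorffMeasure_image_le zero_le_one s)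
  rw [hs, mul_zero, hausdorffMeasure_real, Real.volume_Icc, nonpos_iff_eq_zero,
    ENNReal.ofReal_eq_zero] at this
  linarith

theorem hausdorffMeasure_one_cube_inter_const_pos {S A : Type} [Fintype S] [Fintype A]
    (s : S) (a : A) {R : Set (S × A → ℝ)} (hR : ∀ t : ℝ, (fun _ => t) ∈ R) :
    0 < μH[1] (show Set (EuclideanSpace ℝ (S × A)) from
      WithLp.ofLp ⁻¹' (cube S A ∩ R)) := by
  have hproj : LipschitzWith 1 fun r : EuclideanSpace ℝ (S × A) => r (s, a) := by
    simpa [Function.comp_def] using (LipschitzWith.eval (α := fun _ : S × A => ℝ) (s, a)).comp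
      (PiLp.lipschitzWith_ofLp 2 fun _ : S × A => ℝ)
  refine hausdorffMeasure_one_pos_of_Icc_subset_image hproj (neg_one_lt_zero.trans one_pos)
    fun t ht => ⟨WithLp.toLp 2 fun _ => t, ⟨fun _ => abs_le.mpr ht, hR t⟩, rfl⟩

noncomputable def oneStateMDP : MDP (Fin 1) (Fin 2) where
  s0 := 0
  p _ _ _ := 1
  p_nonneg _ _ _ := zero_le_one
  p_sum_one _ _ := by simp
  disc := 0
  disc_nonneg := le_rfl
  disc_lt_one := one_pos

theorem hausdorffMeasure_cube_inter_softmaxFeasible_ne :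
    μH[1] (show Set (EuclideanSpace ℝ (Fin 1 × Fin 2)) from WithLp.ofLp ⁻¹'
        (cube (Fin 1) (Fin 2) ∩ softmaxFeasible 3 fun _ => softmax fun _ => 0)) ≠
      μH[1] (show Set (EuclideanSpace ℝ (Fin 1 × Fin 2)) from WithLp.ofLp ⁻¹'
        (cube (Fin 1) (Fin 2) ∩ softmaxFeasible 3 fun _ => softmax ![(1 : ℝ), 0])) := by
  have hempty := cube_inter_softmaxFeasible_eq_empty three_pos
    (fun (_ : Fin 1) => ![(1 : ℝ), 0]) (s := 0) (a := 0) (a' := 1) (by norm_num)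
  rw [hempty, Set.preimage_empty, measure_empty]
  exact (hausdorffMeasure_one_cube_inter_const_pos 0 0 (const_mem_softmaxFeasible 3)).ne'

/-- there are a finite MDP without reward, λ, β > 0 and two stochastic policies
whose MCE (resp. BIRL) feasible sets intersected with the unit hypercube have different
`|S|`-dimensional Hausdorff measures. -/
theorem statement1 :
    ∃ (nS nA : ℕ) (M : MDP (Fin nS) (Fin nA)) (lam bet : ℝ)
      (π1 π2 : Fin nS → Fin nA → ℝ),
      0 < lam ∧ 0 < bet ∧ IsPolicy π1 ∧ IsPolicy π2 ∧
      (∀ s a, 0 < π1 s a) ∧ (∀ s a, 0 < π2 s a) ∧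
      μH[(nS : ℝ)] (show Set (EuclideanSpace ℝ (Fin nS × Fin nA)) from
          WithLp.ofLp ⁻¹' (cube (Fin nS) (Fin nA) ∩ RMCE M lam π1)) ≠
        μH[(nS : ℝ)] (show Set (EuclideanSpace ℝ (Fin nS × Fin nA)) from
          WithLp.ofLp ⁻¹' (cube (Fin nS) (Fin nA) ∩ RMCE M lam π2)) ∧
      μH[(nS : ℝ)] (show Set (EuclideanSpace ℝ (Fin nS × Fin nA)) from
          WithLp.ofLp ⁻¹' (cube (Fin nS) (Fin nA) ∩ RBIRL M bet π1)) ≠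
        μH[(nS : ℝ)] (show Set (EuclideanSpace ℝ (Fin nS × Fin nA)) from
          WithLp.ofLp ⁻¹' (cube (Fin nS) (Fin nA) ∩ RBIRL M bet π2)) := by
  refine ⟨1, 2, oneStateMDP, 3, 3, fun _ => softmax fun _ => 0, fun _ => softmax ![(1 : ℝ), 0],
    three_pos, three_pos, isPolicy_softmax _, isPolicy_softmax _,
    fun _ => softmax_pos _, fun _ => softmax_pos _, ?_, ?_⟩ <;>
  simp only [RMCE_eq_softmaxFeasible oneStateMDP rfl, RBIRL_eq_softmaxFeasible oneStateMDP rfl,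
    Nat.cast_one] <;>
  exact hausdorffMeasure_cube_inter_softmaxFeasible_ne
end

section
/- Let F ⊆ ℝ^{S×A} be a set equipped with a measure μ, let w : ℝ^{S×A} → [0,1] be measurable with ∫_F w(r)·(1 + ‖r‖) dμ(r) < ∞, and let M' = (S, A, s0', p', γ') be a finite discounted MDP without reward with cost c ∈ ℝ^{S×A} and budget k ≥ 0 such that Π_{c,k} ≠ ∅. Then the set of minimizers over π' ∈ Π_{c,k} of ∫_F w(r) (max_{π ∈ Π_{c,k}} V^π(s0'; p', r) − V^{π'}(s0'; p', r)) dμ(r) coincides with the set of maximizers over π' ∈ Π_{c,k} of V^{π'}(s0'; p', r_w), where r_w ∈ ℝ^{S×A} is defined componentwise by r_w(s,a) := ∫_F w(r) r(s,a) dμ(r). -/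
open scoped ENNReal

open scoped BigOperators
open MeasureTheory

/-!
For a fixed policy, `V^π(s; p', r) = ∑_{(s,a)} d^π(s,a) r(s,a)`, where the discounted
occupancies `d^π(s,a)` lie in `[0, (1 - γ')⁻¹]`. Hence `|V^π(s; p', r)| ≤ B ‖r‖` with `B`
independent of `π`, so under the moment condition on `w` every integrand involved is integrable,
and exchanging the integral with the finite sum gives `∫_F w(r) V^π(r) dμ = V^π(r_w)`. The term
`∫_F w(r) max_π V^π(r) dμ` is then a finite constant, and removing it turns minimizing the
weighted regret into maximizing `V^π(s0'; p', r_w)`.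
-/

open Finset

lemma IsPolicy.le_one {S A : Type} [Fintype A] {π : S → A → ℝ} (hπ : IsPolicy π) (s : S) (a : A) :
    π s a ≤ 1 :=
  (single_le_sum (fun a' _ => hπ.1 s a') (mem_univ a)).trans_eq (hπ.2 s)

section ValueLinearInReward

variable {S A : Type} [Fintype S] [Fintype A] [DecidableEq S]

lemma Pmat_mem_rowStochastic (M : MDP S A) {π : S → A → ℝ} (hπ : IsPolicy π) :
    Pmat M π ∈ Matrix.rowStochastic ℝ S := by
  refine Matrix.mem_rowStochastic_iff_sum.2
    ⟨fun s s' => sum_nonneg fun a _ => mul_nonneg (hπ.1 s a) (M.p_nonneg s a s'), fun s => ?_⟩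
  simp only [Pmat, Matrix.of_apply]
  rw [sum_comm]
  simp [← mul_sum, M.p_sum_one, hπ.2 s]

noncomputable def occupancy (M : MDP S A) (π : S → A → ℝ) (s : S) (sa : S × A) : ℝ :=
  ∑' t : ℕ, M.disc ^ t * (Pmat M π ^ t) s sa.1 * π sa.1 sa.2

variable (M : MDP S A) {π : S → A → ℝ} (hπ : IsPolicy π)
include hπ

lemma occupancy_summand_mem_Icc (s : S) (sa : S × A) (t : ℕ) :
    M.disc ^ t * (Pmat M π ^ t) s sa.1 * π sa.1 sa.2 ∈ Set.Icc 0 (M.disc ^ t) := by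
  have hP := pow_mem (Pmat_mem_rowStochastic M hπ) t
  have hγ := pow_nonneg M.disc_nonneg t
  exact ⟨mul_nonneg (mul_nonneg hγ (Matrix.nonneg_of_mem_rowStochastic hP)) (hπ.1 _ _),
    (mul_le_of_le_one_right (mul_nonneg hγ (Matrix.nonneg_of_mem_rowStochastic hP))
      (hπ.le_one _ _)).trans (mul_le_of_le_one_right hγ (Matrix.le_one_of_mem_rowStochastic hP))⟩

lemma summable_occupancy_summand (s : S) (sa : S × A) :
    Summable fun t : ℕ => M.disc ^ t * (Pmat M π ^ t) s sa.1 * π sa.1 sa.2 :=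
  .of_nonneg_of_le (fun t => (occupancy_summand_mem_Icc M hπ s sa t).1)
    (fun t => (occupancy_summand_mem_Icc M hπ s sa t).2)
    (summable_geometric_of_lt_one M.disc_nonneg M.disc_lt_one)

lemma occupancy_nonneg (s : S) (sa : S × A) : 0 ≤ occupancy M π s sa :=
  tsum_nonneg fun t => (occupancy_summand_mem_Icc M hπ s sa t).1

lemma occupancy_le (s : S) (sa : S × A) : occupancy M π s sa ≤ (1 - M.disc)⁻¹ := by
  rw [← tsum_geometric_of_lt_one M.disc_nonneg M.disc_lt_one]
  exact (summable_occupancy_summand M hπ s sa).tsum_le_tsum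
    (fun t => (occupancy_summand_mem_Icc M hπ s sa t).2)
    (summable_geometric_of_lt_one M.disc_nonneg M.disc_lt_one)

lemma Vpi_eq_sum_occupancy_mul (r : S × A → ℝ) (s : S) :
    Vpi M π r s = ∑ sa : S × A, occupancy M π s sa * r sa := by
  have hterm : ∀ t : ℕ,
      M.disc ^ t * ((Pmat M π ^ t).mulVec (fun s' => ∑ a, π s' a * r (s', a))) s
        = ∑ sa : S × A, M.disc ^ t * (Pmat M π ^ t) s sa.1 * π sa.1 sa.2 * r sa := by
    intro t
    simp only [Fintype.sum_prod_type, Matrix.mulVec, dotProduct, mul_sum]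
    exact sum_congr rfl fun s' _ => sum_congr rfl fun a _ => by ring
  rw [Vpi, tsum_congr hterm,
    Summable.tsum_finsetSum fun sa _ => (summable_occupancy_summand M hπ s sa).mul_right _]
  exact sum_congr rfl fun sa _ => tsum_mul_right

lemma Vpi_const_mul (c : ℝ) (r : S × A → ℝ) (s : S) :
    Vpi M π (fun sa => c * r sa) s = c * Vpi M π r s := by
  simp only [Vpi_eq_sum_occupancy_mul M hπ, mul_sum, mul_left_comm]

lemma abs_Vpi_le (r : S × A → ℝ) (s : S) :
    |Vpi M π r s| ≤ Fintype.card (S × A) * (1 - M.disc)⁻¹ * ‖r‖ := by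
  rw [Vpi_eq_sum_occupancy_mul M hπ]
  calc |∑ sa : S × A, occupancy M π s sa * r sa|
      ≤ ∑ sa : S × A, |occupancy M π s sa * r sa| := abs_sum_le_sum_abs _ _
    _ ≤ ∑ _sa : S × A, (1 - M.disc)⁻¹ * ‖r‖ := by
      refine sum_le_sum fun sa _ => ?_
      rw [abs_mul, abs_of_nonneg (occupancy_nonneg M hπ s sa), ← Real.norm_eq_abs]
      exact mul_le_mul (occupancy_le M hπ s sa) (norm_le_pi_norm r sa) (norm_nonneg _)
        (inv_nonneg.2 (sub_nonneg.2 M.disc_lt_one.le))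
    _ = Fintype.card (S × A) * (1 - M.disc)⁻¹ * ‖r‖ := by
      rw [sum_const, card_univ, nsmul_eq_mul, mul_assoc]

lemma continuous_Vpi (s : S) : Continuous fun r : S × A → ℝ => Vpi M π r s :=
  (continuous_finsetSum _ fun sa _ => continuous_const.mul (continuous_apply sa)).congr
    fun r => (Vpi_eq_sum_occupancy_mul M hπ r s).symm

lemma Vpi_integral {X : Type*} [MeasurableSpace X] {ν : Measure X} {g : X → S × A → ℝ}
    (hg : ∀ sa, Integrable (fun x => g x sa) ν) (s : S) :
    Vpi M π (fun sa => ∫ x, g x sa ∂ν) s = ∫ x, Vpi M π (g x) s ∂ν := by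
  simp_rw [Vpi_eq_sum_occupancy_mul M hπ]
  rw [integral_finsetSum _ fun sa _ => (hg sa).const_mul _]
  simp_rw [integral_const_mul]

end ValueLinearInReward

lemma abs_ciSup_le {ι : Sort*} [Nonempty ι] {f : ι → ℝ} {b : ℝ} (h : ∀ i, |f i| ≤ b) :
    |⨆ i, f i| ≤ b := by
  have hbdd : BddAbove (Set.range f) :=
    ⟨b, Set.forall_mem_range.2 fun i => (le_abs_self _).trans (h i)⟩
  obtain ⟨i⟩ := ‹Nonempty ι›
  exact abs_le.2 ⟨(neg_le_of_abs_le (h i)).trans (le_ciSup hbdd i),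
    ciSup_le fun i => (le_abs_self _).trans (h i)⟩

section WeightedIntegrals

variable {E : Type*} [NormedAddCommGroup E] [MeasurableSpace E] {μ : Measure E} {F : Set E} {w : E → ℝ}

lemma integrableOn_mul_one_add_norm [OpensMeasurableSpace E] (hw : Measurable w) (hw0 : ∀ r, 0 ≤ w r)
    (hint : (∫⁻ r in F, ENNReal.ofReal (w r * (1 + ‖r‖)) ∂μ) < ⊤) :
    IntegrableOn (fun r => w r * (1 + ‖r‖)) F μ := by
  refine ⟨(hw.mul (measurable_const.add continuous_norm.measurable)).aestronglyMeasurable, ?_⟩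
  rwa [hasFiniteIntegral_iff_ofReal (ae_of_all _ fun r => mul_nonneg (hw0 r) (by positivity))]

lemma integrableOn_mul_of_norm_le (hint : IntegrableOn (fun r => w r * (1 + ‖r‖)) F μ)
    (hw : Measurable w) (hw0 : ∀ r, 0 ≤ w r) {f : E → ℝ} (hf : Measurable f) {B : ℝ}
    (hB : ∀ r, ‖f r‖ ≤ B * (1 + ‖r‖)) :
    IntegrableOn (fun r => w r * f r) F μ :=
  (hint.const_mul B).mono' (hw.mul hf).aestronglyMeasurable <| ae_of_all _ fun r => by
    rw [norm_mul, Real.norm_of_nonneg (hw0 r)]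
    exact (mul_le_mul_of_nonneg_left (hB r) (hw0 r)).trans_eq (mul_left_comm _ _ _)

end WeightedIntegrals

theorem integral_regret_le_iff {S A : Type} [Fintype S] [Fintype A] [DecidableEq S]
    (M : MDP S A) {P : (S → A → ℝ) → Prop} [Nonempty {π // P π}] (hP : ∀ π, P π → IsPolicy π)
    {μ : Measure (S × A → ℝ)} {F : Set (S × A → ℝ)} {w : (S × A → ℝ) → ℝ} (hw : Measurable w)
    (hw0 : ∀ r, 0 ≤ w r) (hint : IntegrableOn (fun r => w r * (1 + ‖r‖)) F μ)
    {π₁ π₂ : S → A → ℝ} (h₁ : IsPolicy π₁) (h₂ : IsPolicy π₂) (s : S) :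
    (∫ r in F, w r * ((⨆ π : {π // P π}, Vpi M π.1 r s) - Vpi M π₁ r s) ∂μ) ≤
        (∫ r in F, w r * ((⨆ π : {π // P π}, Vpi M π.1 r s) - Vpi M π₂ r s) ∂μ) ↔
      Vpi M π₂ (fun sa => ∫ r in F, w r * r sa ∂μ) s ≤
        Vpi M π₁ (fun sa => ∫ r in F, w r * r sa ∂μ) s := by
  set B : ℝ := Fintype.card (S × A) * (1 - M.disc)⁻¹
  have hB : 0 ≤ B := mul_nonneg (Nat.cast_nonneg _) (inv_nonneg.2 (sub_nonneg.2 M.disc_lt_one.le))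
  have hV : ∀ π, IsPolicy π → ∀ r, |Vpi M π r s| ≤ B * (1 + ‖r‖) := fun π hπ r =>
    (abs_Vpi_le M hπ r s).trans (mul_le_mul_of_nonneg_left (by linarith) hB)
  have hsup_meas : Measurable fun r => ⨆ π : {π // P π}, Vpi M π.1 r s := by
    refine (lowerSemicontinuous_ciSup (fun r => ⟨B * (1 + ‖r‖), ?_⟩) fun π =>
      (continuous_Vpi M (hP _ π.2) s).lowerSemicontinuous).measurable
    exact Set.forall_mem_range.2 fun π => le_of_abs_le (hV _ (hP _ π.2) r)
  have hIsup : IntegrableOn (fun r => w r * ⨆ π : {π // P π}, Vpi M π.1 r s) F μ :=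
    integrableOn_mul_of_norm_le hint hw hw0 hsup_meas fun r =>
      abs_ciSup_le fun π => hV _ (hP _ π.2) r
  have hIV : ∀ π, IsPolicy π → IntegrableOn (fun r => w r * Vpi M π r s) F μ := fun π hπ =>
    integrableOn_mul_of_norm_le hint hw hw0 (continuous_Vpi M hπ s).measurable (hV π hπ)
  have hIcoord : ∀ sa, IntegrableOn (fun r => w r * r sa) F μ := fun sa =>
    integrableOn_mul_of_norm_le (B := 1) hint hw hw0 (measurable_pi_apply sa) fun r => by
      linarith [norm_le_pi_norm r sa, norm_nonneg r]
  have hmean : ∀ π, IsPolicy π →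
      Vpi M π (fun sa => ∫ r in F, w r * r sa ∂μ) s = ∫ r in F, w r * Vpi M π r s ∂μ :=
    fun π hπ => by simp only [Vpi_integral M hπ hIcoord, Vpi_const_mul M hπ]
  simp only [mul_sub]
  rw [integral_sub hIsup (hIV π₁ h₁), integral_sub hIsup (hIV π₂ h₂), sub_le_sub_iff_left,
    hmean π₁ h₁, hmean π₂ h₂]

theorem statement6_general {S A : Type} [Fintype S] [Fintype A] [DecidableEq S]
    (μ : MeasureTheory.Measure ((S × A) → ℝ)) (F : Set ((S × A) → ℝ))
    (w : ((S × A) → ℝ) → ℝ) (hw : Measurable w) (hw01 : ∀ r, w r ∈ Set.Icc (0 : ℝ) 1)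
    (M' : MDP S A) (c : S × A → ℝ) (k : ℝ)
    (hint : (∫⁻ r in F, ENNReal.ofReal (w r * (1 + ‖r‖)) ∂μ) < ⊤) :
    {π' : S → A → ℝ | (IsPolicy π' ∧ Vpi M' π' c M'.s0 ≤ k) ∧
        ∀ π'' : S → A → ℝ, IsPolicy π'' → Vpi M' π'' c M'.s0 ≤ k →
          (∫ r in F, w r * ((⨆ π : {π : S → A → ℝ // IsPolicy π ∧ Vpi M' π c M'.s0 ≤ k},
              Vpi M' π.1 r M'.s0) - Vpi M' π' r M'.s0) ∂μ) ≤
          (∫ r in F, w r * ((⨆ π : {π : S → A → ℝ // IsPolicy π ∧ Vpi M' π c M'.s0 ≤ k},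
              Vpi M' π.1 r M'.s0) - Vpi M' π'' r M'.s0) ∂μ)} =
    {π' : S → A → ℝ | (IsPolicy π' ∧ Vpi M' π' c M'.s0 ≤ k) ∧
        ∀ π'' : S → A → ℝ, IsPolicy π'' → Vpi M' π'' c M'.s0 ≤ k →
          Vpi M' π'' (fun sa => ∫ r in F, w r * r sa ∂μ) M'.s0 ≤
            Vpi M' π' (fun sa => ∫ r in F, w r * r sa ∂μ) M'.s0} := by
  have hw0 : ∀ r, 0 ≤ w r := fun r => (hw01 r).1
  have hint' := integrableOn_mul_one_add_norm hw hw0 hint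
  ext π'
  refine and_congr_right fun hπ' => forall₂_congr fun π'' h'' => forall_congr' fun _ => ?_
  have : Nonempty {π // IsPolicy π ∧ Vpi M' π c M'.s0 ≤ k} := ⟨⟨π', hπ'⟩⟩
  exact integral_regret_le_iff M' (fun _ h => h.1) hw hw0 hint' hπ'.1 h'' M'.s0

/-- the minimizers of the weighted average suboptimality coincide with the
maximizers of the value of the mean reward `r_w`. -/
theorem statement6 {S A : Type} [Fintype S] [Fintype A] [DecidableEq S] [DecidableEq A]
    (μ : MeasureTheory.Measure ((S × A) → ℝ)) (F : Set ((S × A) → ℝ))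
    (w : ((S × A) → ℝ) → ℝ) (hw : Measurable w) (hw01 : ∀ r, w r ∈ Set.Icc (0 : ℝ) 1)
    (M' : MDP S A) (c : S × A → ℝ) (k : ℝ) (hk : 0 ≤ k)
    (hint : (∫⁻ r in F, ENNReal.ofReal (w r * (1 + ‖r‖)) ∂μ) < ⊤)
    (hne : ∃ π, IsPolicy π ∧ Vpi M' π c M'.s0 ≤ k) :
    {π' : S → A → ℝ | (IsPolicy π' ∧ Vpi M' π' c M'.s0 ≤ k) ∧
        ∀ π'' : S → A → ℝ, IsPolicy π'' → Vpi M' π'' c M'.s0 ≤ k →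
          (∫ r in F, w r * ((⨆ π : {π : S → A → ℝ // IsPolicy π ∧ Vpi M' π c M'.s0 ≤ k},
              Vpi M' π.1 r M'.s0) - Vpi M' π' r M'.s0) ∂μ) ≤
          (∫ r in F, w r * ((⨆ π : {π : S → A → ℝ // IsPolicy π ∧ Vpi M' π c M'.s0 ≤ k},
              Vpi M' π.1 r M'.s0) - Vpi M' π'' r M'.s0) ∂μ)} =
    {π' : S → A → ℝ | (IsPolicy π' ∧ Vpi M' π' c M'.s0 ≤ k) ∧
        ∀ π'' : S → A → ℝ, IsPolicy π'' → Vpi M' π'' c M'.s0 ≤ k →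
          Vpi M' π'' (fun sa => ∫ r in F, w r * r sa ∂μ) M'.s0 ≤
            Vpi M' π' (fun sa => ∫ r in F, w r * r sa ∂μ) M'.s0} :=
  statement6_general μ F w hw hw01 M' c k hint
end
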